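/- arXiv:1701.09083 — 2 statements merged into one kernel-verified Lean document; each statement's English description precedes it below -/
import Mathlib

section
/- Under the Mallows model MM(σ₀,φ) with 0 < φ < 1 on S_n, for any subset A ⊆ {1,...,n} and u ∈ A, P[σ_A(u) < σ_{0,A}(u)] ≤ (φ+φ²+...+φ^{σ_{0,A}(u)})/(1+φ+...+φ^{σ_{0,A}(u)}) < φ. -/
/-- Kendall tau distance between two permutations of `Fin n`. -/
def kendall {n : ℕ} (σ π : Equiv.Perm (Fin n)) : ℕ :=
  (Finset.univ.filter (fun p : Fin n × Fin n =>
    p.1 < p.2 ∧ ((σ p.1 < σ p.2 ∧ π p.2 < π p.1) ∨ (σ p.2 < σ p.1 ∧ π p.1 < π p.2)))).card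

/- Probability of the event `E` under the Mallows model `MM(σ₀, φ)`, in which a permutation
`σ` has probability proportional to `φ ^ d_τ(σ, σ₀)`. -/
open Classical in
noncomputable def mallowsProb {n : ℕ} (σ₀ : Equiv.Perm (Fin n)) (φ : ℝ)
    (E : Equiv.Perm (Fin n) → Prop) : ℝ :=
  (∑ σ : Equiv.Perm (Fin n), if E σ then φ ^ kendall σ σ₀ else 0) /
    (∑ σ : Equiv.Perm (Fin n), φ ^ kendall σ σ₀)

/-- The geometric sum `φ_{a:b} = φ^a + φ^{a+1} + ⋯ + φ^b` (equal to `0` if `a > b`). -/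
noncomputable def phiSum (φ : ℝ) (a b : ℕ) : ℝ := ∑ k ∈ Finset.Icc a b, φ ^ k

/-- One-based position of element `u` in the permutation `σ`. -/
def pos {n : ℕ} (σ : Equiv.Perm (Fin n)) (u : Fin n) : ℕ := (σ u : ℕ) + 1

/-- Projection rank of `x` within the subset `A` under `σ`. -/
def proj {n : ℕ} (σ : Equiv.Perm (Fin n)) (A : Finset (Fin n)) (x : Fin n) : ℕ :=
  (A.filter (fun y => σ y ≤ σ x)).card

/-!
Let `r = σ_{0,A}(u)` and call `y ∈ A` displaced in `σ` when `σ₀` puts `y` before `u` but `σ` puts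
it after `u`. There are at most `r` displaced elements, and if there are none then `σ_A(u) ≥ r`.
Swapping `u` with the earliest displaced element removes exactly that element from the displaced
set, lowers the Kendall distance to `σ₀` (a discordant pair gets swapped), and can be undone from
the result alone. So the Mallows weight of the permutations with `e` displaced elements is at most
`φ^e` times that of the permutations with none, and summing over `1 ≤ e ≤ r` gives
`P[σ_A(u) < r] ≤ φ_{1:r} P[σ_A(u) ≥ r]`, which rearranges to the bound.
-/

open Equiv Finset

variable {n : ℕ}

abbrev Discordant (σ π : Perm (Fin n)) (x y : Fin n) : Prop :=
  (σ x < σ y ∧ π y < π x) ∨ (σ y < σ x ∧ π x < π y)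

theorem discordant_comm {σ π : Perm (Fin n)} {x y : Fin n} :
    Discordant σ π x y ↔ Discordant σ π y x :=
  or_comm

theorem Discordant.ne {σ π : Perm (Fin n)} {x y : Fin n} (h : Discordant σ π x y) : x ≠ y := by
  rintro rfl; rcases h with h | h <;> exact lt_irrefl _ h.1

theorem card_discordant (σ π : Perm (Fin n)) :
    #{p : Fin n × Fin n | Discordant σ π p.1 p.2} = 2 * kendall σ π := by
  rw [kendall, two_mul, ← card_filter_add_card_filter_not (fun p : Fin n × Fin n => p.1 < p.2),
    filter_filter, filter_filter]
  congr 1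
  · exact congrArg card (filter_congr fun _ _ => and_comm)
  · refine card_nbij' Prod.swap Prod.swap ?_ ?_ (fun _ _ => rfl) (fun _ _ => rfl)
    · rintro ⟨x, y⟩ h
      simp only [coe_filter, mem_univ, true_and, Set.mem_ofPred_eq, not_lt] at h ⊢
      exact ⟨lt_of_le_of_ne h.2 (h.1.ne.symm), discordant_comm.1 h.1⟩
    · rintro ⟨x, y⟩ h
      simp only [coe_filter, mem_univ, true_and, Set.mem_ofPred_eq, not_lt] at h ⊢
      exact ⟨discordant_comm.1 h.2, h.1.le⟩

theorem card_discordant_mul_swap_lt {σ π : Perm (Fin n)} {u b : Fin n} (hσ : σ u < σ b)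
    (hπ : π b < π u) :
    #{p : Fin n × Fin n | Discordant (σ * swap u b) π p.1 p.2} <
      #{p : Fin n × Fin n | Discordant σ π p.1 p.2} := by
  have hub : u ≠ b := by rintro rfl; exact lt_irrefl _ hσ
  -- Counting each pair together with its image under `swap u b` makes the comparison pointwise:
  -- the pair `(x, u)` is compensated by `(x, b)`.
  let w (ρ : Perm (Fin n)) (p : Fin n × Fin n) : ℕ :=
    (if Discordant ρ π p.1 p.2 then 1 else 0) +
      if Discordant ρ π (swap u b p.1) (swap u b p.2) then 1 else 0
  have hle : ∀ p, w (σ * swap u b) p ≤ w σ p := by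
    rintro ⟨x, y⟩
    have hx : x = u ∨ x = b ∨ (x ≠ u ∧ x ≠ b) := by tauto
    have hy : y = u ∨ y = b ∨ (y ≠ u ∧ y ≠ b) := by tauto
    rcases hx with rfl | rfl | ⟨hxu, hxb⟩ <;> rcases hy with rfl | rfl | ⟨hyu, hyb⟩ <;>
      simp only [w, Discordant, Perm.mul_apply, swap_apply_left, swap_apply_right,
        swap_apply_of_ne_of_ne, *, Ne, not_false_eq_true] <;>
      split_ifs <;> omega
  have hlt : w (σ * swap u b) (u, b) < w σ (u, b) := by
    simp [w, Discordant, hσ, hπ, hσ.not_gt, hπ.not_gt]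
  have hw : ∀ ρ, 2 * #{p : Fin n × Fin n | Discordant ρ π p.1 p.2} = ∑ p, w ρ p := by
    intro ρ
    rw [sum_add_distrib, card_filter, two_mul]
    congr 1
    exact (Fintype.sum_equiv ((swap u b).prodCongr (swap u b)) _ _ fun _ => rfl).symm
  have := sum_lt_sum (fun p _ => hle p) ⟨(u, b), mem_univ _, hlt⟩
  have := hw σ
  have := hw (σ * swap u b)
  omega

theorem kendall_mul_swap_lt {σ π : Perm (Fin n)} {u b : Fin n} (hσ : σ u < σ b)
    (hπ : π b < π u) : kendall (σ * swap u b) π < kendall σ π := by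
  have := card_discordant_mul_swap_lt hσ hπ
  rw [card_discordant, card_discordant] at this
  omega

section Displaced

variable (σ₀ : Perm (Fin n)) (A : Finset (Fin n)) (u : Fin n)

def displaced (σ : Perm (Fin n)) : Finset (Fin n) :=
  {y ∈ A | σ₀ y < σ₀ u ∧ σ u < σ y}

variable {σ₀ A u}

theorem proj_le_of_displaced_eq_empty {σ : Perm (Fin n)} (h : displaced σ₀ A u σ = ∅) :
    proj σ₀ A u ≤ proj σ A u := by
  refine card_le_card fun y hy => ?_
  rw [mem_filter] at hy ⊢
  refine ⟨hy.1, ?_⟩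
  rcases eq_or_ne y u with rfl | hyu
  · exact le_rfl
  · refine not_lt.1 fun hlt => ?_
    have : y ∈ displaced σ₀ A u σ :=
      mem_filter.2 ⟨hy.1, lt_of_le_of_ne hy.2 (σ₀.injective.ne hyu), hlt⟩
    simp [h] at this

theorem card_displaced_le (σ : Perm (Fin n)) : #(displaced σ₀ A u σ) ≤ proj σ₀ A u :=
  card_le_card fun _ hy => mem_filter.2 ⟨(mem_filter.1 hy).1, (mem_filter.1 hy).2.1.le⟩

section MulSwap

variable {σ : Perm (Fin n)} {b : Fin n} (hb : b ∈ displaced σ₀ A u σ)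
  (hmin : ∀ y ∈ displaced σ₀ A u σ, σ b ≤ σ y)
include hb hmin

theorem displaced_mul_swap : displaced σ₀ A u (σ * swap u b) = (displaced σ₀ A u σ).erase b := by
  have hσb := (mem_filter.1 hb).2.2
  ext y
  simp only [displaced, mem_erase, mem_filter, Perm.mul_apply, swap_apply_left]
  rcases eq_or_ne y b with rfl | hyb
  · simp [hσb.not_gt]
  rcases eq_or_ne y u with rfl | hyu
  · simp
  rw [swap_apply_of_ne_of_ne hyu hyb]
  refine ⟨fun ⟨hyA, hy₀, hy⟩ => ⟨hyb, hyA, hy₀, hσb.trans hy⟩,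
    fun ⟨_, hyA, hy₀, hy⟩ => ⟨hyA, hy₀, ?_⟩⟩
  exact lt_of_le_of_ne (hmin y (mem_filter.2 ⟨hyA, hy₀, hy⟩)) (σ.injective.ne hyb.symm)

-- `b` is the last element before `u`, in `σ * swap u b`, among those that `σ₀` puts before `u`;
-- this recovers `b`, hence `σ`, from `σ * swap u b`.
theorem mul_swap_apply_lt {y : Fin n} (hyA : y ∈ A) (hy₀ : σ₀ y < σ₀ u) (hyb : y ≠ b)
    (hy : (σ * swap u b) y < (σ * swap u b) u) : (σ * swap u b) y < (σ * swap u b) b := by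
  have hyu : y ≠ u := by rintro rfl; exact lt_irrefl _ hy₀
  simp only [Perm.mul_apply, swap_apply_left, swap_apply_right,
    swap_apply_of_ne_of_ne hyu hyb] at hy ⊢
  refine lt_of_le_of_ne (not_lt.1 fun hlt => ?_) (σ.injective.ne hyu)
  exact (hmin y (mem_filter.2 ⟨hyA, hy₀, hlt⟩)).not_gt hy

end MulSwap

theorem mul_swap_inj {σ₁ σ₂ : Perm (Fin n)} {b₁ b₂ : Fin n}
    (hb₁ : b₁ ∈ displaced σ₀ A u σ₁) (hmin₁ : ∀ y ∈ displaced σ₀ A u σ₁, σ₁ b₁ ≤ σ₁ y)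
    (hb₂ : b₂ ∈ displaced σ₀ A u σ₂) (hmin₂ : ∀ y ∈ displaced σ₀ A u σ₂, σ₂ b₂ ≤ σ₂ y)
    (h : σ₁ * swap u b₁ = σ₂ * swap u b₂) : σ₁ = σ₂ := by
  obtain ⟨hA₁, h₀₁, hσ₁⟩ := mem_filter.1 hb₁
  obtain ⟨hA₂, h₀₂, hσ₂⟩ := mem_filter.1 hb₂
  suffices b₁ = b₂ by subst this; exact mul_right_cancel h
  by_contra hne
  have lt₁ := mul_swap_apply_lt hb₂ hmin₂ hA₁ h₀₁ hne (by simpa [← h] using hσ₁)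
  have lt₂ := mul_swap_apply_lt hb₁ hmin₁ hA₂ h₀₂ (Ne.symm hne) (by simpa [h] using hσ₂)
  rw [← h] at lt₁
  exact lt_asymm lt₁ lt₂

variable (σ₀ A u) in
noncomputable def promote (σ : Perm (Fin n)) : Perm (Fin n) :=
  if h : (displaced σ₀ A u σ).Nonempty then
    σ * swap u (Classical.choose ((displaced σ₀ A u σ).exists_min_image σ h))
  else σ

theorem exists_promote_eq {σ : Perm (Fin n)} (h : (displaced σ₀ A u σ).Nonempty) :
    ∃ b ∈ displaced σ₀ A u σ, (∀ y ∈ displaced σ₀ A u σ, σ b ≤ σ y) ∧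
      promote σ₀ A u σ = σ * swap u b := by
  obtain ⟨hb, hmin⟩ := Classical.choose_spec ((displaced σ₀ A u σ).exists_min_image σ h)
  exact ⟨_, hb, hmin, dif_pos h⟩

theorem card_displaced_promote {σ : Perm (Fin n)} (h : (displaced σ₀ A u σ).Nonempty) :
    #(displaced σ₀ A u (promote σ₀ A u σ)) + 1 = #(displaced σ₀ A u σ) := by
  obtain ⟨b, hb, hmin, heq⟩ := exists_promote_eq h
  rw [heq, displaced_mul_swap hb hmin, card_erase_add_one hb]

theorem kendall_promote_lt {σ : Perm (Fin n)} (h : (displaced σ₀ A u σ).Nonempty) :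
    kendall (promote σ₀ A u σ) σ₀ < kendall σ σ₀ := by
  obtain ⟨b, hb, -, heq⟩ := exists_promote_eq h
  obtain ⟨-, hσ₀, hσ⟩ := mem_filter.1 hb
  exact heq ▸ kendall_mul_swap_lt hσ hσ₀

theorem promote_injOn :
    Set.InjOn (promote σ₀ A u) {σ | (displaced σ₀ A u σ).Nonempty} := by
  intro σ₁ h₁ σ₂ h₂ h
  obtain ⟨b₁, hb₁, hmin₁, heq₁⟩ := exists_promote_eq h₁
  obtain ⟨b₂, hb₂, hmin₂, heq₂⟩ := exists_promote_eq h₂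
  exact mul_swap_inj hb₁ hmin₁ hb₂ hmin₂ (heq₁ ▸ heq₂ ▸ h)

variable {φ : ℝ}

theorem sum_card_displaced_succ_le (hφ0 : 0 ≤ φ) (hφ1 : φ ≤ 1) (e : ℕ) :
    ∑ σ with #(displaced σ₀ A u σ) = e + 1, φ ^ kendall σ σ₀ ≤
      φ * ∑ σ with #(displaced σ₀ A u σ) = e, φ ^ kendall σ σ₀ := by
  set S := ({σ | #(displaced σ₀ A u σ) = e + 1} : Finset (Perm (Fin n)))
  have hS : ∀ σ ∈ S, (displaced σ₀ A u σ).Nonempty := fun σ hσ =>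
    card_pos.1 ((mem_filter.1 hσ).2 ▸ e.succ_pos)
  calc ∑ σ ∈ S, φ ^ kendall σ σ₀
      ≤ ∑ σ ∈ S, φ * φ ^ kendall (promote σ₀ A u σ) σ₀ := by
        refine sum_le_sum fun σ hσ => ?_
        rw [← pow_succ']
        exact pow_le_pow_of_le_one hφ0 hφ1 (kendall_promote_lt (hS σ hσ))
    _ = φ * ∑ τ ∈ S.image (promote σ₀ A u), φ ^ kendall τ σ₀ := by
        rw [sum_image fun σ₁ h₁ σ₂ h₂ => promote_injOn (hS σ₁ h₁) (hS σ₂ h₂), mul_sum]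
    _ ≤ φ * ∑ σ with #(displaced σ₀ A u σ) = e, φ ^ kendall σ σ₀ := by
        refine mul_le_mul_of_nonneg_left
          (sum_le_sum_of_subset_of_nonneg (fun τ hτ => ?_) fun _ _ _ => by positivity) hφ0
        obtain ⟨σ, hσ, rfl⟩ := mem_image.1 hτ
        have := card_displaced_promote (hS σ hσ)
        simp only [S, mem_filter, mem_univ, true_and] at hσ ⊢
        omega

theorem sum_card_displaced_le (hφ0 : 0 ≤ φ) (hφ1 : φ ≤ 1) (e : ℕ) :
    ∑ σ with #(displaced σ₀ A u σ) = e, φ ^ kendall σ σ₀ ≤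
      φ ^ e * ∑ σ with #(displaced σ₀ A u σ) = 0, φ ^ kendall σ σ₀ := by
  induction e with
  | zero => simp
  | succ e ih =>
    calc _ ≤ φ * ∑ σ with #(displaced σ₀ A u σ) = e, φ ^ kendall σ σ₀ :=
          sum_card_displaced_succ_le hφ0 hφ1 e
      _ ≤ φ * (φ ^ e * ∑ σ with #(displaced σ₀ A u σ) = 0, φ ^ kendall σ σ₀) :=
          mul_le_mul_of_nonneg_left ih hφ0
      _ = _ := by ring

theorem sum_proj_lt_le (hφ0 : 0 ≤ φ) (hφ1 : φ ≤ 1) :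
    ∑ σ with proj σ A u < proj σ₀ A u, φ ^ kendall σ σ₀ ≤
      phiSum φ 1 (proj σ₀ A u) * ∑ σ with ¬proj σ A u < proj σ₀ A u, φ ^ kendall σ σ₀ := by
  set r := proj σ₀ A u
  calc ∑ σ with proj σ A u < r, φ ^ kendall σ σ₀
      ≤ ∑ σ with #(displaced σ₀ A u σ) ∈ Icc 1 r, φ ^ kendall σ σ₀ := by
        refine sum_le_sum_of_subset_of_nonneg (fun σ hσ => ?_) fun _ _ _ => by positivity
        simp only [mem_filter, mem_univ, true_and, mem_Icc] at hσ ⊢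
        refine ⟨card_pos.2 (nonempty_iff_ne_empty.2 fun h => ?_), card_displaced_le σ⟩
        exact hσ.not_ge (proj_le_of_displaced_eq_empty h)
    _ = ∑ e ∈ Icc 1 r, ∑ σ with #(displaced σ₀ A u σ) = e, φ ^ kendall σ σ₀ :=
        (sum_fiberwise_eq_sum_filter _ _ _ _).symm
    _ ≤ ∑ e ∈ Icc 1 r, φ ^ e * ∑ σ with #(displaced σ₀ A u σ) = 0, φ ^ kendall σ σ₀ :=
        sum_le_sum fun e _ => sum_card_displaced_le hφ0 hφ1 e
    _ ≤ phiSum φ 1 r * ∑ σ with ¬proj σ A u < r, φ ^ kendall σ σ₀ := by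
        rw [← sum_mul]
        refine mul_le_mul_of_nonneg_left (sum_le_sum_of_subset_of_nonneg (fun σ hσ => ?_)
          fun _ _ _ => by positivity) (sum_nonneg fun _ _ => by positivity)
        simp only [mem_filter, mem_univ, true_and, card_eq_zero, not_lt] at hσ ⊢
        exact proj_le_of_displaced_eq_empty hσ

end Displaced

theorem mallowsProb_le_div_one_add {σ₀ : Perm (Fin n)} {φ c : ℝ} (hφ : 0 < φ) (hc : 0 ≤ c)
    {E : Perm (Fin n) → Prop} [DecidablePred E]
    (h : ∑ σ with E σ, φ ^ kendall σ σ₀ ≤ c * ∑ σ with ¬E σ, φ ^ kendall σ σ₀) :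
    mallowsProb σ₀ φ E ≤ c / (1 + c) := by
  have hsplit := sum_filter_add_sum_filter_not univ E fun σ => φ ^ kendall σ σ₀
  have hZ : 0 < ∑ σ, φ ^ kendall σ σ₀ := sum_pos (fun _ _ => by positivity) univ_nonempty
  have hP : mallowsProb σ₀ φ E = (∑ σ with E σ, φ ^ kendall σ σ₀) / ∑ σ, φ ^ kendall σ σ₀ := by
    rw [mallowsProb, sum_filter]
    congr!
  rw [hP, div_le_div_iff₀ hZ (by positivity), ← hsplit]
  linear_combination h

theorem phiSum_zero_eq_one_add (φ : ℝ) (r : ℕ) : phiSum φ 0 r = 1 + phiSum φ 1 r := by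
  rw [phiSum, phiSum, ← sum_Ioc_add_eq_sum_Icc r.zero_le, ← Icc_add_one_left_eq_Ioc, zero_add,
    pow_zero, add_comm]

theorem phiSum_succ (φ : ℝ) {a b : ℕ} (h : a ≤ b + 1) :
    phiSum φ a (b + 1) = phiSum φ a b + φ ^ (b + 1) :=
  sum_Icc_succ_top h _

theorem mul_phiSum_zero (φ : ℝ) (r : ℕ) : φ * phiSum φ 0 r = phiSum φ 1 (r + 1) := by
  induction r with
  | zero => simp [phiSum]
  | succ r ih =>
    rw [phiSum_succ φ (by omega), mul_add, ih, phiSum_succ φ (by omega : 1 ≤ r + 1 + 1)]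
    ring

theorem phiSum_one_div_phiSum_zero_lt {φ : ℝ} (hφ : 0 < φ) (r : ℕ) :
    phiSum φ 1 r / phiSum φ 0 r < φ := by
  have hS : 0 ≤ phiSum φ 1 r := sum_nonneg fun _ _ => by positivity
  rw [div_lt_iff₀ (by rw [phiSum_zero_eq_one_add]; positivity), mul_phiSum_zero,
    phiSum_succ φ (by omega)]
  linarith [pow_pos hφ (r + 1)]

theorem mallows_proj_below_general {n : ℕ} (σ₀ : Equiv.Perm (Fin n)) (φ : ℝ)
    (hφ0 : 0 < φ) (hφ1 : φ < 1) (A : Finset (Fin n)) (u : Fin n) :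
    mallowsProb σ₀ φ (fun σ => proj σ A u < proj σ₀ A u) ≤
      phiSum φ 1 (proj σ₀ A u) / phiSum φ 0 (proj σ₀ A u) ∧
    phiSum φ 1 (proj σ₀ A u) / phiSum φ 0 (proj σ₀ A u) < φ := by
  refine ⟨?_, phiSum_one_div_phiSum_zero_lt hφ0 _⟩
  rw [phiSum_zero_eq_one_add]
  exact mallowsProb_le_div_one_add hφ0 (sum_nonneg fun _ _ => by positivity)
    (sum_proj_lt_le hφ0.le hφ1.le)

/-- Lemma 4.5, part 2): under `MM(σ₀,φ)` with `0 < φ < 1`, for `A ⊆ [n]` and `u ∈ A`,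
`P[σ_A(u) < σ_{0,A}(u)] ≤ φ_{1:σ_{0,A}(u)} / φ_{0:σ_{0,A}(u)} < φ`. -/
theorem mallows_proj_below {n : ℕ} (σ₀ : Equiv.Perm (Fin n)) (φ : ℝ)
    (hφ0 : 0 < φ) (hφ1 : φ < 1) (A : Finset (Fin n)) (u : Fin n) (hu : u ∈ A) :
    mallowsProb σ₀ φ (fun σ => proj σ A u < proj σ₀ A u) ≤
      phiSum φ 1 (proj σ₀ A u) / phiSum φ 0 (proj σ₀ A u) ∧
    phiSum φ 1 (proj σ₀ A u) / phiSum φ 0 (proj σ₀ A u) < φ :=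
  mallows_proj_below_general σ₀ φ hφ0 hφ1 A u
end

section
/- Assume σ₁,...,σ_m are i.i.d. samples from the Mallows model MM(σ₀,φ) on S_n with φ < 1/2. If m ≥ (2/(1-2φ)²)·log(2n/δ), then with probability at least 1−δ, for every t ∈ {2,...,n} the median of the values σ_{k,S_t}(t) over k ∈ [m] equals σ_{0,S_t}(t), where S_t = {1,...,t}; consequently the LCA median-aggregation output equals σ₀. -/
/-- The median of `m` natural-number values: the smallest `v` such that at least `m/2` of the
values are `≤ v`. -/
noncomputable def medianNat (m : ℕ) (v : Fin m → ℕ) : ℕ :=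
  sInf {z : ℕ | m ≤ 2 * (Finset.univ.filter (fun k => v k ≤ z)).card}

instance {n : ℕ} : MeasurableSpace (Equiv.Perm (Fin n)) := ⊤

open MeasureTheory ProbabilityTheory

/-!
The projected rank of `u` in `σ` can exceed its rank in `σ₀` only if some `y` that `σ₀` ranks
after `u` is placed before `u` by `σ`. Swapping `u` with the nearest such `y` is injective on
this event and removes at least one inversion with respect to `σ₀`, so the event has Mallows
probability at most `φ`; reversing all orders gives the same bound for the rank dropping.
Among `m` independent samples, a majority on one wrong side then has probability at most
`2 ^ m · (φ (1 - φ)) ^ (m / 2) ≤ δ / (2n)` (a union bound over the possible majorities), and a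
union bound over `u` and both sides shows that with probability `1 - δ` every median is the
rank in `σ₀`. Finally the ranks `proj σ {y ≤ u} u` (a Lehmer code) determine `σ`: by
induction on `u`, they fix the relative order of `u` and every `y < u`.
-/

open Finset

lemma sum_pow_le_mul_sum_of_injOn {ι κ : Type*} {s : Finset ι} {t : Finset κ}
    {a : ι → ℕ} {b : κ → ℕ} (f : ι → κ) (hf : Set.InjOn f s) (hst : Set.MapsTo f s t)
    (hab : ∀ i ∈ s, b (f i) + 1 ≤ a i) {φ : ℝ} (hφ0 : 0 ≤ φ) (hφ1 : φ ≤ 1) :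
    ∑ i ∈ s, φ ^ a i ≤ φ * ∑ j ∈ t, φ ^ b j := by
  classical
  calc ∑ i ∈ s, φ ^ a i ≤ ∑ i ∈ s, φ * φ ^ b (f i) := by
        gcongr with i hi
        rw [← pow_succ']
        exact pow_le_pow_of_le_one hφ0 hφ1 (hab i hi)
    _ = φ * ∑ j ∈ s.image f, φ ^ b j := by rw [sum_image hf, mul_sum]
    _ ≤ φ * ∑ j ∈ t, φ ^ b j := by
        gcongr
        exact image_subset_iff.2 hst

lemma lt_iff_card_filter_le_le_card_filter_lt {α β : Type*} [LinearOrder β] (f : α → β)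
    {s : Finset α} {y : α} (hy : y ∈ s) (c : β) :
    f y < c ↔ #{z ∈ s | f z ≤ f y} ≤ #{z ∈ s | f z < c} := by
  refine ⟨fun h => card_le_card fun z hz => ?_, fun h => ?_⟩
  · simp only [mem_filter] at hz ⊢
    exact ⟨hz.1, hz.2.trans_lt h⟩
  · by_contra! hc
    refine h.not_gt (card_lt_card ⟨fun z hz => ?_, fun hsub => ?_⟩)
    · simp only [mem_filter] at hz ⊢
      exact ⟨hz.1, (hz.2.trans_le hc).le⟩
    · have := hsub (mem_filter.2 ⟨hy, le_rfl⟩)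
      exact (mem_filter.1 this).2.not_ge hc

section Kendall

variable {n : ℕ}

lemma kendall_self (σ : Equiv.Perm (Fin n)) : kendall σ σ = 0 := by
  simp only [kendall, card_eq_zero, filter_eq_empty_iff]
  grind

lemma kendall_revPerm_mul (σ π : Equiv.Perm (Fin n)) :
    kendall (Fin.revPerm * σ) (Fin.revPerm * π) = kendall σ π := by
  unfold kendall
  congr 1
  apply filter_congr
  simp only [Equiv.Perm.mul_apply, Fin.revPerm_apply, Fin.rev_lt_rev]
  grind

lemma kendall_eq_card_inversions (σ π : Equiv.Perm (Fin n)) :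
    kendall σ π = #{p : Fin n × Fin n | π p.1 < π p.2 ∧ σ p.2 < σ p.1} := by
  unfold kendall
  let flip : Fin n × Fin n → Fin n × Fin n := fun p => if p.1 < p.2 then p else p.swap
  apply Finset.card_nbij' (fun p => if π p.1 < π p.2 then p else p.swap) flip
  all_goals intro p hp
  all_goals simp only [coe_filter, mem_univ, true_and, Set.mem_ofPred_eq, flip] at hp ⊢
  all_goals grind

def IsNearestInversion (σ₀ σ : Equiv.Perm (Fin n)) (u w : Fin n) : Prop :=
  σ₀ u < σ₀ w ∧ σ w < σ u ∧ ∀ y, σ₀ u < σ₀ y → σ y < σ u → σ y ≤ σ w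

lemma exists_isNearestInversion {σ₀ σ : Equiv.Perm (Fin n)} {u : Fin n}
    (h : ∃ y, σ₀ u < σ₀ y ∧ σ y < σ u) : ∃ w, IsNearestInversion σ₀ σ u w := by
  classical
  obtain ⟨w, hw, hmax⟩ := exists_max_image {y | σ₀ u < σ₀ y ∧ σ y < σ u} σ
    (by simpa [Finset.Nonempty] using h)
  simp only [mem_filter, mem_univ, true_and] at hw hmax
  exact ⟨w, hw.1, hw.2, fun y h₀ hσ => hmax y ⟨h₀, hσ⟩⟩

/-- In `σ * swap u w`, `w` is the element placed nearest after `u` among those that `σ₀` ranks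
after `u`, so `w` is determined by the product. -/
lemma IsNearestInversion.eq_of_mul_swap_eq {σ₀ σ σ' : Equiv.Perm (Fin n)} {u w w' : Fin n}
    (hw : IsNearestInversion σ₀ σ u w) (hw' : IsNearestInversion σ₀ σ' u w')
    (he : σ * Equiv.swap u w = σ' * Equiv.swap u w') : w = w' := by
  obtain ⟨h₀, hσ, hmax⟩ := hw
  obtain ⟨h₀', hσ', hmax'⟩ := hw'
  have heu := DFunLike.congr_fun he u
  have hew := DFunLike.congr_fun he w
  have hew' := DFunLike.congr_fun he w'
  have := hmax w'
  have := hmax' w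
  have hinj {x y : Fin n} : σ x = σ y ↔ x = y := σ.injective.eq_iff
  have hinj' {x y : Fin n} : σ' x = σ' y ↔ x = y := σ'.injective.eq_iff
  simp only [Equiv.Perm.mul_apply, Equiv.swap_apply_def] at heu hew hew'
  grind

/-- The elements that `σ` places strictly between `w` and `u` precede `u` in `σ₀` (by the choice
of `w`), so the inversions they form with `w` are traded for inversions with `u`, while the
inversion `(u, w)` disappears. -/
lemma kendall_mul_swap_add_one_le {σ₀ σ : Equiv.Perm (Fin n)} {u w : Fin n}
    (h : IsNearestInversion σ₀ σ u w) : kendall (σ * Equiv.swap u w) σ₀ + 1 ≤ kendall σ σ₀ := by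
  obtain ⟨h₀, hσ, hmax⟩ := h
  rw [kendall_eq_card_inversions, kendall_eq_card_inversions]
  have huw : (u, w) ∈ ({p | σ₀ p.1 < σ₀ p.2 ∧ σ p.2 < σ p.1} : Finset (Fin n × Fin n)) := by
    simp [h₀, hσ]
  rw [← card_erase_add_one huw, add_le_add_iff_right]
  have hinj {x y : Fin n} : σ x = σ y ↔ x = y := σ.injective.eq_iff
  apply card_le_card_of_injOn (fun p => if p.2 = u ∧ σ p.1 < σ u then (p.1, w) else p)
  · rintro ⟨x, y⟩ hp
    simp only [coe_filter, mem_univ, true_and, Set.mem_ofPred_eq, Equiv.Perm.mul_apply,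
      Equiv.swap_apply_def, coe_erase, Set.mem_sdiff, Set.mem_singleton_iff] at hp ⊢
    have := hmax x
    have := hmax y
    grind (splits := 30)
  · rintro ⟨x1, y1⟩ hp ⟨x2, y2⟩ hq h
    simp only [mem_coe, Equiv.Perm.mul_apply, Equiv.swap_apply_def] at hp hq h
    grind

end Kendall

section Mallows

variable {n : ℕ}

lemma one_le_sum_pow_kendall (σ₀ : Equiv.Perm (Fin n)) {φ : ℝ} (hφ0 : 0 ≤ φ) :
    1 ≤ ∑ σ, φ ^ kendall σ σ₀ := by
  simpa [kendall_self] using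
    single_le_sum (fun σ _ => pow_nonneg hφ0 (kendall σ σ₀)) (mem_univ σ₀)

lemma mallowsProb_eq_sum_div (σ₀ : Equiv.Perm (Fin n)) (φ : ℝ)
    (E : Equiv.Perm (Fin n) → Prop) [DecidablePred E] :
    mallowsProb σ₀ φ E = (∑ σ with E σ, φ ^ kendall σ σ₀) / ∑ σ, φ ^ kendall σ σ₀ := by
  rw [mallowsProb, sum_filter]
  congr! 3

lemma mallowsProb_nonneg (σ₀ : Equiv.Perm (Fin n)) {φ : ℝ} (hφ0 : 0 ≤ φ)
    (E : Equiv.Perm (Fin n) → Prop) : 0 ≤ mallowsProb σ₀ φ E := by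
  unfold mallowsProb
  have := fun σ : Equiv.Perm (Fin n) => pow_nonneg hφ0 (kendall σ σ₀)
  positivity

lemma mallowsProb_mono (σ₀ : Equiv.Perm (Fin n)) {φ : ℝ} (hφ0 : 0 ≤ φ)
    {E F : Equiv.Perm (Fin n) → Prop} (h : ∀ σ, E σ → F σ) :
    mallowsProb σ₀ φ E ≤ mallowsProb σ₀ φ F := by
  unfold mallowsProb
  gcongr with σ
  split_ifs <;> simp_all [pow_nonneg hφ0]

lemma mallowsProb_revPerm_mul (σ₀ : Equiv.Perm (Fin n)) (φ : ℝ)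
    (E : Equiv.Perm (Fin n) → Prop) :
    mallowsProb σ₀ φ E = mallowsProb (Fin.revPerm * σ₀) φ (fun σ => E (Fin.revPerm * σ)) := by
  classical
  unfold mallowsProb
  have hrev : ∀ σ : Equiv.Perm (Fin n), Fin.revPerm * (Fin.revPerm * σ) = σ := fun σ => by
    ext; simp
  congr 1 <;> refine Fintype.sum_equiv (Equiv.mulLeft Fin.revPerm) _ _ fun σ => ?_ <;>
    simp only [Equiv.coe_mulLeft, kendall_revPerm_mul, hrev]

lemma sum_pow_kendall_filter_inversion_left_le (σ₀ : Equiv.Perm (Fin n)) (u : Fin n)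
    {φ : ℝ} (hφ0 : 0 ≤ φ) (hφ1 : φ ≤ 1) :
    ∑ σ with ∃ y, σ₀ u < σ₀ y ∧ σ y < σ u, φ ^ kendall σ σ₀
      ≤ φ * ∑ σ, φ ^ kendall σ σ₀ := by
  have : Nonempty (Fin n) := ⟨u⟩
  have : ∀ σ ∈ ({σ | ∃ y, σ₀ u < σ₀ y ∧ σ y < σ u} : Finset (Equiv.Perm (Fin n))),
      ∃ w, IsNearestInversion σ₀ σ u w := fun σ hσ =>
    exists_isNearestInversion (mem_filter.1 hσ).2
  choose! w hw using this
  refine sum_pow_le_mul_sum_of_injOn (a := (kendall · σ₀)) (b := (kendall · σ₀))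
    (fun σ => σ * Equiv.swap u (w σ)) ?_
    (fun _ _ => mem_coe.2 (mem_univ _)) (fun σ hσ => kendall_mul_swap_add_one_le (hw σ hσ))
    hφ0 hφ1
  intro σ hσ σ' hσ' he
  have hww := (hw σ hσ).eq_of_mul_swap_eq (hw σ' hσ') he
  simp only [hww] at he
  exact mul_right_cancel he

lemma mallowsProb_exists_inversion_left_le (σ₀ : Equiv.Perm (Fin n)) (u : Fin n) {φ : ℝ}
    (hφ0 : 0 ≤ φ) (hφ1 : φ ≤ 1) :
    mallowsProb σ₀ φ (fun σ => ∃ y, σ₀ u < σ₀ y ∧ σ y < σ u) ≤ φ := by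
  classical
  rw [mallowsProb_eq_sum_div,
    div_le_iff₀ (zero_lt_one.trans_le (one_le_sum_pow_kendall σ₀ hφ0))]
  exact sum_pow_kendall_filter_inversion_left_le σ₀ u hφ0 hφ1

lemma mallowsProb_exists_inversion_right_le (σ₀ : Equiv.Perm (Fin n)) (u : Fin n) {φ : ℝ}
    (hφ0 : 0 ≤ φ) (hφ1 : φ ≤ 1) :
    mallowsProb σ₀ φ (fun σ => ∃ y, σ u < σ y ∧ σ₀ y < σ₀ u) ≤ φ := by
  rw [mallowsProb_revPerm_mul]
  convert mallowsProb_exists_inversion_left_le (Fin.revPerm * σ₀) u hφ0 hφ1 using 5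
  simp [Fin.rev_lt_rev, and_comm]

lemma exists_of_proj_lt_proj {σ τ : Equiv.Perm (Fin n)} {A : Finset (Fin n)} {u : Fin n}
    (h : proj σ A u < proj τ A u) : ∃ y, σ u < σ y ∧ τ y < τ u := by
  by_contra! hno
  refine h.not_ge (card_le_card fun y hy => ?_)
  simp only [mem_filter] at hy ⊢
  have := hno y
  have : τ y = τ u ↔ y = u := τ.injective.eq_iff
  grind

lemma mallowsProb_proj_lt_proj_le (σ₀ : Equiv.Perm (Fin n)) (A : Finset (Fin n)) (u : Fin n)
    {φ : ℝ} (hφ0 : 0 ≤ φ) (hφ1 : φ ≤ 1) :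
    mallowsProb σ₀ φ (fun σ => proj σ₀ A u < proj σ A u) ≤ φ :=
  (mallowsProb_mono σ₀ hφ0 fun _ => exists_of_proj_lt_proj).trans
    (mallowsProb_exists_inversion_left_le σ₀ u hφ0 hφ1)

lemma mallowsProb_proj_gt_proj_le (σ₀ : Equiv.Perm (Fin n)) (A : Finset (Fin n)) (u : Fin n)
    {φ : ℝ} (hφ0 : 0 ≤ φ) (hφ1 : φ ≤ 1) :
    mallowsProb σ₀ φ (fun σ => proj σ A u < proj σ₀ A u) ≤ φ :=
  (mallowsProb_mono σ₀ hφ0 fun _ => exists_of_proj_lt_proj).trans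
    (mallowsProb_exists_inversion_right_le σ₀ u hφ0 hφ1)

lemma measure_preimage_eq_ofReal_mallowsProb {σ₀ : Equiv.Perm (Fin n)} {φ : ℝ}
    (hφ0 : 0 ≤ φ) {Ω : Type*} [MeasurableSpace Ω] {μ : Measure Ω} {Y : Ω → Equiv.Perm (Fin n)}
    (hY : Measurable Y)
    (hlaw : ∀ π, μ {ω | Y ω = π} = ENNReal.ofReal (mallowsProb σ₀ φ (fun σ => σ = π)))
    (E : Equiv.Perm (Fin n) → Prop) :
    μ (Y ⁻¹' {σ | E σ}) = ENNReal.ofReal (mallowsProb σ₀ φ E) := by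
  classical
  have hE : {σ | E σ} = ↑({σ | E σ} : Finset (Equiv.Perm (Fin n))) := by ext; simp
  rw [hE, ← sum_measure_preimage_singleton _ fun π _ => hY MeasurableSpace.measurableSet_top]
  simp only [Set.preimage, Set.mem_singleton_iff, hlaw]
  rw [← ENNReal.ofReal_sum_of_nonneg fun π _ => mallowsProb_nonneg σ₀ hφ0 _]
  congr 1
  simp only [mallowsProb_eq_sum_div, ← sum_div, filter_eq', mem_univ, if_true, sum_singleton]

end Mallows

section Ranks

variable {n : ℕ}

lemma proj_filter_le_self (τ : Equiv.Perm (Fin n)) (u : Fin n) :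
    proj τ {y | y ≤ u} u = #{z ∈ Iio u | τ z < τ u} + 1 := by
  rw [proj, ← card_insert_of_notMem (s := {z ∈ Iio u | τ z < τ u}) (a := u) (by simp)]
  congr 1
  ext z
  simp only [mem_filter, mem_univ, true_and, mem_insert, mem_Iio]
  have : τ z = τ u ↔ z = u := τ.injective.eq_iff
  grind

lemma lt_iff_lt_of_proj_eq {ρ σ : Equiv.Perm (Fin n)} {u : Fin n}
    (hproj : proj ρ {y | y ≤ u} u = proj σ {y | y ≤ u} u)
    (hbelow : ∀ a < u, ∀ b < u, ρ a ≤ ρ b ↔ σ a ≤ σ b) {y : Fin n} (hy : y < u) :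
    ρ y < ρ u ↔ σ y < σ u := by
  have hy' : y ∈ Iio u := mem_Iio.2 hy
  rw [lt_iff_card_filter_le_le_card_filter_lt ρ hy',
    lt_iff_card_filter_le_le_card_filter_lt σ hy']
  rw [proj_filter_le_self, proj_filter_le_self, add_left_inj] at hproj
  rw [hproj, filter_congr fun z hz => hbelow z (mem_Iio.1 hz) y hy]

lemma le_iff_le_of_lt_iff_lt {ρ σ : Equiv.Perm (Fin n)} {a b : Fin n}
    (hab : a < b → (ρ a < ρ b ↔ σ a < σ b)) (hba : b < a → (ρ b < ρ a ↔ σ b < σ a)) :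
    ρ a ≤ ρ b ↔ σ a ≤ σ b := by
  have : ρ a = ρ b ↔ a = b := ρ.injective.eq_iff
  have : σ a = σ b ↔ a = b := σ.injective.eq_iff
  grind

lemma perm_eq_of_proj_eq {ρ σ : Equiv.Perm (Fin n)}
    (h : ∀ u, proj ρ {y | y ≤ u} u = proj σ {y | y ≤ u} u) : ρ = σ := by
  have hlt (u : Fin n) : ∀ y < u, ρ y < ρ u ↔ σ y < σ u := by
    induction u using WellFoundedLT.induction with
    | _ u ih =>
      refine fun y hy => lt_iff_lt_of_proj_eq (h u) (fun a ha b hb => ?_) hy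
      exact le_iff_le_of_lt_iff_lt (ih b hb a) (ih a ha b)
  have hmono : StrictMono (ρ ∘ σ.symm) := fun x y hxy => by
    have := le_iff_le_of_lt_iff_lt (hlt (σ.symm x) (σ.symm y)) (hlt (σ.symm y) (σ.symm x))
    rw [Function.comp_apply, Function.comp_apply, ← not_le, this, Equiv.apply_symm_apply,
      Equiv.apply_symm_apply]
    exact hxy.not_ge
  ext x
  simpa using congrArg Fin.val (hmono.apply_eq (x := σ x))

end Ranks

lemma medianNat_eq_of_two_mul_card_lt {m : ℕ} {v : Fin m → ℕ} {v₀ : ℕ}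
    (hgt : 2 * #{k | v₀ < v k} < m) (hlt : 2 * #{k | v k < v₀} < m) : medianNat m v = v₀ := by
  have hsplit : #{k | v k ≤ v₀} + #{k | v₀ < v k} = m := by
    simpa using card_filter_add_card_filter_not (s := univ) (fun k => v k ≤ v₀)
  have hv₀ : v₀ ∈ {z | m ≤ 2 * #{k | v k ≤ z}} := by
    simp only [Set.mem_ofPred_eq]
    omega
  refine le_antisymm (Nat.sInf_le hv₀) (le_csInf ⟨v₀, hv₀⟩ fun z hz => ?_)
  by_contra! hz₀
  have : #{k | v k ≤ z} ≤ #{k | v k < v₀} :=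
    card_le_card fun k => by simp only [mem_filter, mem_univ, true_and]; omega
  simp only [Set.mem_ofPred_eq] at hz
  omega

lemma pow_mul_one_sub_pow_le {p φ : ℝ} (hp0 : 0 ≤ p) (hpφ : p ≤ φ) (hφ : φ ≤ 1 / 2)
    {j m : ℕ} (hj : m ≤ 2 * j) (hjm : j ≤ m) :
    p ^ j * (1 - p) ^ (m - j) ≤ √(φ * (1 - φ)) ^ m := by
  set s := √(φ * (1 - φ))
  have hs : s ^ 2 = φ * (1 - φ) := Real.sq_sqrt (by nlinarith)
  have hps : p * (1 - p) ≤ s ^ 2 := by rw [hs]; nlinarith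
  have hp_le_s : p ≤ s := Real.le_sqrt_of_sq_le (by nlinarith)
  calc p ^ j * (1 - p) ^ (m - j) = (p * (1 - p)) ^ (m - j) * p ^ (2 * j - m) := by
        rw [mul_pow, mul_right_comm, ← pow_add]
        congr 2
        omega
    _ ≤ (s ^ 2) ^ (m - j) * s ^ (2 * j - m) := by
        gcongr
        nlinarith
    _ = s ^ m := by
        rw [← pow_mul, ← pow_add]
        congr 1
        omega

lemma measure_majority_mem_le {ι α Ω : Type*} [Fintype ι] [MeasurableSpace α]
    [MeasurableSpace Ω] {μ : Measure Ω} [IsProbabilityMeasure μ] {X : ι → Ω → α}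
    (hX : ∀ i, Measurable (X i)) (hindep : iIndepFun X μ) {B : Set α} [DecidablePred (· ∈ B)]
    (hB : MeasurableSet B)
    {p φ : ℝ} (hp0 : 0 ≤ p) (hpφ : p ≤ φ) (hφ : φ ≤ 1 / 2)
    (hlaw : ∀ i, μ (X i ⁻¹' B) = ENNReal.ofReal p) :
    μ {ω | Fintype.card ι ≤ 2 * #{i | X i ω ∈ B}}
      ≤ ENNReal.ofReal ((2 * √(φ * (1 - φ))) ^ Fintype.card ι) := by
  classical
  set m := Fintype.card ι
  set s := √(φ * (1 - φ))
  let C (T : Finset ι) (i : ι) : Set α := if i ∈ T then B else Bᶜ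
  have hlawC (i : ι) : μ (X i ⁻¹' B)ᶜ = ENNReal.ofReal (1 - p) := by
    rw [prob_compl_eq_one_sub (hX i hB), hlaw i, ← ENNReal.ofReal_one,
      ENNReal.ofReal_sub _ hp0]
  have hcover : {ω | m ≤ 2 * #{i | X i ω ∈ B}}
      ⊆ ⋃ T ∈ (univ.filter fun T : Finset ι => m ≤ 2 * #T), ⋂ i, X i ⁻¹' C T i := by
    intro ω hω
    refine Set.mem_biUnion (mem_filter.2 ⟨mem_univ _, hω⟩) (Set.mem_iInter.2 fun i => ?_)
    by_cases hi : X i ω ∈ B <;> simp [C, hi]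
  have hpattern (T : Finset ι) (hT : m ≤ 2 * #T) :
      μ (⋂ i, X i ⁻¹' C T i) ≤ ENNReal.ofReal (s ^ m) := by
    rw [hindep.meas_iInter fun i => ⟨C T i, by by_cases hi : i ∈ T <;> simp [C, hi, hB], rfl⟩]
    have (i : ι) : μ (X i ⁻¹' C T i) = ENNReal.ofReal (if i ∈ T then p else 1 - p) := by
      by_cases hi : i ∈ T <;> simp [C, hi, hlaw, hlawC]
    simp only [this]
    rw [← ENNReal.ofReal_prod_of_nonneg fun i _ => by split_ifs <;> linarith, prod_ite]
    rw [prod_const, prod_const, filter_univ_mem, filter_notMem_eq_sdiff, card_univ_sdiff]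
    have hTm : #T ≤ m := card_le_univ T
    exact ENNReal.ofReal_le_ofReal (pow_mul_one_sub_pow_le hp0 hpφ hφ hT hTm)
  have hpatterns : #(univ.filter fun T : Finset ι => m ≤ 2 * #T) ≤ 2 ^ m :=
    (card_filter_le _ _).trans (by simp [m])
  calc μ {ω | m ≤ 2 * #{i | X i ω ∈ B}}
      ≤ ∑ T ∈ univ.filter (fun T : Finset ι => m ≤ 2 * #T), μ (⋂ i, X i ⁻¹' C T i) :=
        (measure_mono hcover).trans (measure_biUnion_finset_le _ _)
    _ ≤ ∑ T ∈ univ.filter (fun T : Finset ι => m ≤ 2 * #T), ENNReal.ofReal (s ^ m) :=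
        sum_le_sum fun T hT => hpattern T (mem_filter.1 hT).2
    _ ≤ 2 ^ m * ENNReal.ofReal (s ^ m) := by
        rw [sum_const, nsmul_eq_mul]
        gcongr
        exact_mod_cast hpatterns
    _ = ENNReal.ofReal ((2 * s) ^ m) := by
        rw [mul_pow, ENNReal.ofReal_mul (by positivity), ENNReal.ofReal_pow zero_le_two]
        norm_num

lemma two_mul_sqrt_pow_le {φ ε : ℝ} {m : ℕ} (hφ0 : 0 ≤ φ) (hφ : φ < 1 / 2) (hε : 0 < ε)
    (hm : 2 / (1 - 2 * φ) ^ 2 * Real.log ε⁻¹ ≤ m) :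
    (2 * √(φ * (1 - φ))) ^ m ≤ ε := by
  set c := (1 - 2 * φ) ^ 2 with hc_def
  have hc : 0 < c := pow_pos (by linarith) 2
  have hsq : (2 * √(φ * (1 - φ))) ^ 2 ≤ Real.exp (-c / 2) ^ 2 :=
    calc (2 * √(φ * (1 - φ))) ^ 2 = -c + 1 := by
          rw [mul_pow, Real.sq_sqrt (by nlinarith), hc_def]; ring
      _ ≤ Real.exp (-c) := Real.add_one_le_exp _
      _ = Real.exp (-c / 2) ^ 2 := by rw [← Real.exp_nat_mul]; push_cast; ring_nf
  have hbase := (pow_le_pow_iff_left₀ (by positivity) (by positivity) two_ne_zero).1 hsq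
  have hlog : Real.log ε⁻¹ ≤ m * c / 2 := by
    rw [div_mul_eq_mul_div, div_le_iff₀ hc] at hm
    linarith
  calc (2 * √(φ * (1 - φ))) ^ m ≤ Real.exp (-c / 2) ^ m := by gcongr
    _ = Real.exp (-(m * c / 2)) := by rw [← Real.exp_nat_mul]; ring_nf
    _ ≤ Real.exp (-Real.log ε⁻¹) := by gcongr
    _ = ε := by rw [Real.exp_neg, Real.exp_log (inv_pos.2 hε), inv_inv]

lemma ofReal_one_sub_le_of_compl_iUnion_subset {ι Ω : Type*} [Fintype ι] [MeasurableSpace Ω]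
    {μ : Measure Ω} [IsProbabilityMeasure μ] {bad : ι → Set Ω} {S : Set Ω} {ε δ : ℝ}
    (hbad : ∀ i, μ (bad i) ≤ ENNReal.ofReal ε) (hε : 0 ≤ ε) (hεδ : Fintype.card ι * ε ≤ δ)
    (hS : (⋃ i, bad i)ᶜ ⊆ S) :
    ENNReal.ofReal (1 - δ) ≤ μ S := by
  have hunion : μ (⋃ i, bad i) ≤ ENNReal.ofReal δ :=
    calc μ (⋃ i, bad i) ≤ ∑ i, μ (bad i) := measure_iUnion_fintype_le μ bad
      _ ≤ ∑ _ : ι, ENNReal.ofReal ε := sum_le_sum fun i _ => hbad i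
      _ = ENNReal.ofReal (Fintype.card ι * ε) := by
        rw [sum_const, nsmul_eq_mul, ENNReal.ofReal_mul (Nat.cast_nonneg _),
          ENNReal.ofReal_natCast, card_univ]
      _ ≤ ENNReal.ofReal δ := ENNReal.ofReal_le_ofReal hεδ
  calc ENNReal.ofReal (1 - δ) ≤ 1 - μ (⋃ i, bad i) := by
        rw [ENNReal.ofReal_sub _ ((mul_nonneg (Nat.cast_nonneg _) hε).trans hεδ),
          ENNReal.ofReal_one]
        exact tsub_le_tsub_left hunion 1
    _ ≤ μ (⋃ i, bad i)ᶜ := by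
        rw [tsub_le_iff_left, ← measure_univ (μ := μ)]
        exact measure_univ_le_add_compl _
    _ ≤ μ S := measure_mono hS

theorem lca_median_recovers_centroid_general {n m : ℕ} (σ₀ : Equiv.Perm (Fin n)) (φ δ : ℝ)
    (hφ0 : 0 < φ) (hφ : φ < 1 / 2) (hδ0 : 0 < δ)
    (hm : (2 / (1 - 2 * φ) ^ 2) * Real.log (2 * n / δ) ≤ (m : ℝ))
    {Ω : Type*} [MeasurableSpace Ω] (μ : Measure Ω) [IsProbabilityMeasure μ]
    (X : Fin m → Ω → Equiv.Perm (Fin n))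
    (hmeas : ∀ k, Measurable (X k))
    (hindep : iIndepFun X μ)
    (hlaw : ∀ k π, μ {ω | X k ω = π} = ENNReal.ofReal (mallowsProb σ₀ φ (fun σ => σ = π))) :
    ENNReal.ofReal (1 - δ) ≤
      μ {ω | (∀ u : Fin n, 1 ≤ (u : ℕ) →
          medianNat m (fun k => proj (X k ω) (Finset.univ.filter (fun y => y ≤ u)) u) =
            proj σ₀ (Finset.univ.filter (fun y => y ≤ u)) u) ∧
        ∀ ρ : Equiv.Perm (Fin n),
          (∀ u : Fin n, proj ρ (Finset.univ.filter (fun y => y ≤ u)) u =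
            medianNat m (fun k => proj (X k ω) (Finset.univ.filter (fun y => y ≤ u)) u)) →
          ρ = σ₀} := by
  classical
  let r (σ : Equiv.Perm (Fin n)) (u : Fin n) : ℕ := proj σ {y | y ≤ u} u
  have hmajority (hn : 0 < n) (E : Equiv.Perm (Fin n) → Prop) [DecidablePred E]
      (hE : mallowsProb σ₀ φ E ≤ φ) :
      μ {ω | m ≤ 2 * #{k | E (X k ω)}} ≤ ENNReal.ofReal (δ / (2 * n)) := by
    calc _ ≤ ENNReal.ofReal ((2 * √(φ * (1 - φ))) ^ m) := by
          simpa using measure_majority_mem_le hmeas hindep MeasurableSpace.measurableSet_top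
            (mallowsProb_nonneg σ₀ hφ0.le E) hE hφ.le
            fun k => measure_preimage_eq_ofReal_mallowsProb hφ0.le (hmeas k) (hlaw k) E
      _ ≤ _ := ENNReal.ofReal_le_ofReal <|
          two_mul_sqrt_pow_le hφ0.le hφ (by positivity) (by rwa [inv_div])
  refine ofReal_one_sub_le_of_compl_iUnion_subset (ε := δ / n)
    (bad := fun u => {ω | m ≤ 2 * #{k | r σ₀ u < r (X k ω) u}} ∪
      {ω | m ≤ 2 * #{k | r (X k ω) u < r σ₀ u}}) (fun u => ?_) (by positivity) ?_ ?_
  · have hn : 0 < n := u.pos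
    calc _ ≤ ENNReal.ofReal (δ / (2 * n)) + ENNReal.ofReal (δ / (2 * n)) :=
          (measure_union_le _ _).trans <| add_le_add
            (hmajority hn _ (mallowsProb_proj_lt_proj_le σ₀ _ u hφ0.le (by linarith)))
            (hmajority hn _ (mallowsProb_proj_gt_proj_le σ₀ _ u hφ0.le (by linarith)))
      _ = ENNReal.ofReal (δ / n) := by
          rw [← ENNReal.ofReal_add (by positivity) (by positivity)]
          ring_nf
  · simp only [Fintype.card_fin]
    rcases Nat.eq_zero_or_pos n with rfl | hn
    · simpa using hδ0.le
    · rw [mul_div_cancel₀ _ (by positivity)]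
  · intro ω hω
    simp only [Set.compl_iUnion, Set.mem_iInter, Set.mem_compl_iff, Set.mem_union,
      Set.mem_ofPred_eq, not_or, not_le] at hω
    have hmed (u : Fin n) : medianNat m (fun k => r (X k ω) u) = r σ₀ u :=
      medianNat_eq_of_two_mul_card_lt (hω u).1 (hω u).2
    exact ⟨fun u _ => hmed u, fun ρ hρ => perm_eq_of_proj_eq fun u => (hρ u).trans (hmed u)⟩

/-- Theorem 4.3: if `σ₁, …, σ_m` are i.i.d. samples of `MM(σ₀,φ)` with `φ < 1/2` and
`m ≥ (2/(1-2φ)²) log(2n/δ)`, then with probability at least `1 − δ`, for every `t ∈ {2,…,n}`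
the median of the projected positions `σ_{k,S_t}(t)` (with `S_t = {1,…,t}`) equals
`σ_{0,S_t}(t)`; consequently any permutation consistent with these medians — i.e. the output of
the median LCA algorithm — equals `σ₀`. -/
theorem lca_median_recovers_centroid {n m : ℕ} (σ₀ : Equiv.Perm (Fin n)) (φ δ : ℝ)
    (hφ0 : 0 < φ) (hφ : φ < 1 / 2) (hδ0 : 0 < δ) (hδ1 : δ < 1)
    (hm : (2 / (1 - 2 * φ) ^ 2) * Real.log (2 * n / δ) ≤ (m : ℝ))
    {Ω : Type*} [MeasurableSpace Ω] (μ : Measure Ω) [IsProbabilityMeasure μ]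
    (X : Fin m → Ω → Equiv.Perm (Fin n))
    (hmeas : ∀ k, Measurable (X k))
    (hindep : iIndepFun X μ)
    (hlaw : ∀ k π, μ {ω | X k ω = π} = ENNReal.ofReal (mallowsProb σ₀ φ (fun σ => σ = π))) :
    ENNReal.ofReal (1 - δ) ≤
      μ {ω | (∀ u : Fin n, 1 ≤ (u : ℕ) →
          medianNat m (fun k => proj (X k ω) (Finset.univ.filter (fun y => y ≤ u)) u) =
            proj σ₀ (Finset.univ.filter (fun y => y ≤ u)) u) ∧
        ∀ ρ : Equiv.Perm (Fin n),
          (∀ u : Fin n, proj ρ (Finset.univ.filter (fun y => y ≤ u)) u =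
            medianNat m (fun k => proj (X k ω) (Finset.univ.filter (fun y => y ≤ u)) u)) →
          ρ = σ₀} :=
  lca_median_recovers_centroid_general σ₀ φ δ hφ0 hφ hδ0 hm μ X hmeas hindep hlaw
end
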